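/- Let S and T be inverse semigroups and suppose that the idempotents of S are totally ordered under the natural partial order (for all idempotents e, f of S, either e ≤ f or f ≤ e). Then every premorphism θ : S → T is a semigroup homomorphism: θ(a*b) = θ(a)*θ(b) for all a, b ∈ S. -/

import Mathlib

/-!
If `a⁻¹a ≤ bb⁻¹` then `a = (ab)b⁻¹`, so `θa·θb ≤ θ(ab)·θb⁻¹·θb`. In an inverse semigroup,
`u ≤ v` together with `v ≤ u·z` forces `u = v`; applied to `u = θ(ab) ≤ θa·θb = v` this gives the
claim. The case `bb⁻¹ ≤ a⁻¹a` is the mirror image, through `b = a⁻¹(ab)`.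
-/

/-- An inverse semigroup: a semigroup in which every element `a` has a
(unique) inverse `a⁻¹` with `a * a⁻¹ * a = a` and `a⁻¹ * a * a⁻¹ = a⁻¹`. -/
class InverseSemigroup (S : Type*) extends Semigroup S, Inv S where
  mul_inv_mul : ∀ a : S, a * a⁻¹ * a = a
  inv_mul_inv : ∀ a : S, a⁻¹ * a * a⁻¹ = a⁻¹
  inv_unique : ∀ a b : S, a * b * a = a → b * a * b = b → b = a⁻¹

/-- The natural partial order on an inverse semigroup:
`a ≤ b` iff `a = e * b` for some idempotent `e`. -/
def npo {S : Type*} [InverseSemigroup S] (a b : S) : Prop :=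
  ∃ e : S, e * e = e ∧ a = e * b

/-- A premorphism of inverse semigroups: `θ (a * b) ≤ θ a * θ b` in the
natural partial order of the codomain. -/
def IsPremorphism {S T : Type*} [InverseSemigroup S] [InverseSemigroup T]
    (θ : S → T) : Prop :=
  ∀ a b : S, npo (θ (a * b)) (θ a * θ b)

namespace InverseSemigroup

variable {S : Type*} [InverseSemigroup S]

theorem inv_inv (a : S) : a⁻¹⁻¹ = a :=
  (inv_unique a⁻¹ a (inv_mul_inv a) (mul_inv_mul a)).symm

theorem isIdempotentElem_mul_inv (a : S) : IsIdempotentElem (a * a⁻¹) := by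
  rw [IsIdempotentElem, ← mul_assoc, mul_inv_mul]

theorem isIdempotentElem_inv_mul (a : S) : IsIdempotentElem (a⁻¹ * a) := by
  rw [IsIdempotentElem, ← mul_assoc, inv_mul_inv]

theorem _root_.IsIdempotentElem.inv_eq_self {e : S} (he : IsIdempotentElem e) : e⁻¹ = e :=
  (inv_unique e e (by rw [he.eq, he.eq]) (by rw [he.eq, he.eq])).symm

theorem isIdempotentElem_mul {e f : S} (he : IsIdempotentElem e) (hf : IsIdempotentElem f) :
    IsIdempotentElem (e * f) := by
  set x := (e * f)⁻¹
  have hx : x * (e * f) * x = x := inv_mul_inv (e * f)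
  -- `f x e` is another inverse of `e f`, so it is `x`; this makes `x` idempotent.
  have hfxe : f * x * e = x := by
    refine inv_unique (e * f) (f * x * e) ?_ ?_
    · calc e * f * (f * x * e) * (e * f) = e * (f * f) * x * (e * e) * f := by
            simp only [mul_assoc]
        _ = e * f * x * (e * f) := by rw [he.eq, hf.eq]; simp only [mul_assoc]
        _ = e * f := mul_inv_mul (e * f)
    · calc f * x * e * (e * f) * (f * x * e) = f * (x * (e * e) * (f * f) * x) * e := by
            simp only [mul_assoc]
        _ = f * x * e := by rw [he.eq, hf.eq, mul_assoc x e f, hx]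
  have hxx : IsIdempotentElem x :=
    calc x * x = f * x * e * (f * x * e) := by rw [hfxe]
      _ = f * (x * (e * f) * x) * e := by simp only [mul_assoc]
      _ = x := by rw [hx, hfxe]
  rw [← inv_inv (e * f), hxx.inv_eq_self]
  exact hxx

theorem commute_of_isIdempotentElem {e f : S} (he : IsIdempotentElem e)
    (hf : IsIdempotentElem f) : Commute e f := by
  have hfe : f * e = (e * f)⁻¹ := by
    refine inv_unique (e * f) (f * e) ?_ ?_
    · calc e * f * (f * e) * (e * f) = e * (f * f) * (e * e) * f := by simp only [mul_assoc]
        _ = e * f * (e * f) := by rw [he.eq, hf.eq]; simp only [mul_assoc]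
        _ = e * f := isIdempotentElem_mul he hf
    · calc f * e * (e * f) * (f * e) = f * (e * e) * (f * f) * e := by simp only [mul_assoc]
        _ = f * e * (f * e) := by rw [he.eq, hf.eq]; simp only [mul_assoc]
        _ = f * e := isIdempotentElem_mul hf he
  rw [Commute, SemiconjBy, hfe, (isIdempotentElem_mul he hf).inv_eq_self]

theorem mul_inv_rev (a b : S) : (a * b)⁻¹ = b⁻¹ * a⁻¹ := by
  have hc : Commute (b * b⁻¹) (a⁻¹ * a) :=
    commute_of_isIdempotentElem (isIdempotentElem_mul_inv b) (isIdempotentElem_inv_mul a)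
  refine (inv_unique _ _ ?_ ?_).symm
  · calc a * b * (b⁻¹ * a⁻¹) * (a * b) = a * (b * b⁻¹ * (a⁻¹ * a)) * b := by
          simp only [mul_assoc]
      _ = a * a⁻¹ * a * (b * b⁻¹ * b) := by rw [hc.eq]; simp only [mul_assoc]
      _ = a * b := by rw [mul_inv_mul, mul_inv_mul]
  · calc b⁻¹ * a⁻¹ * (a * b) * (b⁻¹ * a⁻¹) = b⁻¹ * (a⁻¹ * a * (b * b⁻¹)) * a⁻¹ := by
          simp only [mul_assoc]
      _ = b⁻¹ * b * b⁻¹ * (a⁻¹ * a * a⁻¹) := by rw [← hc.eq]; simp only [mul_assoc]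
      _ = b⁻¹ * a⁻¹ := by rw [inv_mul_inv, inv_mul_inv]

end InverseSemigroup

open InverseSemigroup

section NaturalOrder

variable {S : Type*} [InverseSemigroup S] {u v : S}

theorem npo.eq_mul_inv_self_mul (h : npo u v) : u = u * u⁻¹ * v := by
  obtain ⟨e, he : IsIdempotentElem e, rfl⟩ := h
  have hc := commute_of_isIdempotentElem he (isIdempotentElem_mul_inv v)
  calc e * v = e * e * (v * v⁻¹ * v) := by rw [he.eq, mul_inv_mul]
    _ = e * (e * (v * v⁻¹)) * v := by simp only [mul_assoc]
    _ = e * v * (v⁻¹ * e) * v := by rw [hc.eq]; simp only [mul_assoc]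
    _ = e * v * (e * v)⁻¹ * v := by rw [InverseSemigroup.mul_inv_rev, he.inv_eq_self]

theorem npo.eq_mul_inv_mul_self (h : npo u v) : u = v * (u⁻¹ * u) := by
  obtain ⟨e, he : IsIdempotentElem e, rfl⟩ := h
  have hc := commute_of_isIdempotentElem he (isIdempotentElem_mul_inv v)
  calc e * v = e * (v * v⁻¹) * v := by rw [mul_assoc e, mul_inv_mul]
    _ = v * v⁻¹ * (e * e) * v := by rw [hc.eq, he.eq]
    _ = v * ((v⁻¹ * e) * (e * v)) := by simp only [mul_assoc]
    _ = v * ((e * v)⁻¹ * (e * v)) := by rw [InverseSemigroup.mul_inv_rev, he.inv_eq_self]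

theorem npo_of_eq_mul {f : S} (hf : IsIdempotentElem f) (h : u = v * f) : npo u v := by
  subst h
  refine ⟨v * f * (v * f)⁻¹, isIdempotentElem_mul_inv _, ?_⟩
  have hc := commute_of_isIdempotentElem (isIdempotentElem_inv_mul v) hf
  calc v * f = v * (v⁻¹ * v) * f := by rw [← mul_assoc v, mul_inv_mul]
    _ = v * (f * f) * v⁻¹ * v := by rw [mul_assoc, hc.eq, hf.eq]; simp only [mul_assoc]
    _ = v * f * (f * v⁻¹) * v := by simp only [mul_assoc]
    _ = v * f * (v * f)⁻¹ * v := by rw [InverseSemigroup.mul_inv_rev, hf.inv_eq_self]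

theorem npo.mul_right (h : npo u v) (w : S) : npo (u * w) (v * w) :=
  let ⟨e, he, hu⟩ := h
  ⟨e, he, by rw [hu, mul_assoc]⟩

theorem npo.mul_left (h : npo u v) (w : S) : npo (w * u) (w * v) :=
  npo_of_eq_mul (isIdempotentElem_inv_mul u) (by rw [mul_assoc, ← h.eq_mul_inv_mul_self])

theorem npo.mul_eq_left_of_isIdempotentElem (hu : IsIdempotentElem u) (h : npo u v) :
    u * v = u := by
  simpa only [hu.inv_eq_self, hu.eq, eq_comm] using h.eq_mul_inv_self_mul

theorem npo.mul_eq_right_of_isIdempotentElem (hu : IsIdempotentElem u) (h : npo u v) :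
    v * u = u := by
  simpa only [hu.inv_eq_self, hu.eq, eq_comm] using h.eq_mul_inv_mul_self

theorem npo.eq_of_npo_mul_right {z : S} (h : npo u v) (h' : npo v (u * z)) : u = v :=
  calc u = u * u⁻¹ * v := h.eq_mul_inv_self_mul
    _ = u * u⁻¹ * (u * z * (v⁻¹ * v)) := congrArg (u * u⁻¹ * ·) h'.eq_mul_inv_mul_self
    _ = u * u⁻¹ * u * (z * (v⁻¹ * v)) := by simp only [mul_assoc]
    _ = u * z * (v⁻¹ * v) := by rw [mul_inv_mul, mul_assoc]
    _ = v := h'.eq_mul_inv_mul_self.symm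

theorem npo.eq_of_npo_mul_left {z : S} (h : npo u v) (h' : npo v (z * u)) : u = v :=
  calc u = v * (u⁻¹ * u) := h.eq_mul_inv_mul_self
    _ = v * v⁻¹ * (z * u) * (u⁻¹ * u) := congrArg (· * (u⁻¹ * u)) h'.eq_mul_inv_self_mul
    _ = v * v⁻¹ * z * (u * u⁻¹ * u) := by simp only [mul_assoc]
    _ = v * v⁻¹ * (z * u) := by rw [mul_inv_mul, mul_assoc _ z]
    _ = v := h'.eq_mul_inv_self_mul.symm

theorem mul_mul_inv_eq_of_npo {a b : S} (h : npo (a⁻¹ * a) (b * b⁻¹)) : a * b * b⁻¹ = a :=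
  calc a * b * b⁻¹ = a * a⁻¹ * a * (b * b⁻¹) := by rw [mul_inv_mul, mul_assoc]
    _ = a * (a⁻¹ * a * (b * b⁻¹)) := by simp only [mul_assoc]
    _ = a := by
      rw [h.mul_eq_left_of_isIdempotentElem (isIdempotentElem_inv_mul a), ← mul_assoc,
        mul_inv_mul]

theorem inv_mul_mul_eq_of_npo {a b : S} (h : npo (b * b⁻¹) (a⁻¹ * a)) : a⁻¹ * (a * b) = b :=
  calc a⁻¹ * (a * b) = a⁻¹ * a * (b * b⁻¹) * b := by rw [mul_assoc _ _ b, mul_inv_mul, mul_assoc]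
    _ = b := by
      rw [h.mul_eq_right_of_isIdempotentElem (isIdempotentElem_mul_inv b), mul_inv_mul]

end NaturalOrder

theorem premorphism_is_hom_of_totally_ordered_idempotents
    {S T : Type*} [InverseSemigroup S] [InverseSemigroup T]
    (htot : ∀ e f : S, e * e = e → f * f = f → npo e f ∨ npo f e)
    (θ : S → T) (hθ : IsPremorphism θ) :
    ∀ a b : S, θ (a * b) = θ a * θ b := by
  intro a b
  rcases htot (a⁻¹ * a) (b * b⁻¹) (isIdempotentElem_inv_mul a) (isIdempotentElem_mul_inv b)
    with h | h
  · have hle := (hθ (a * b) b⁻¹).mul_right (θ b)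
    rw [mul_mul_inv_eq_of_npo h, mul_assoc] at hle
    exact (hθ a b).eq_of_npo_mul_right hle
  · have hle := (hθ a⁻¹ (a * b)).mul_left (θ a)
    rw [inv_mul_mul_eq_of_npo h, ← mul_assoc] at hle
    exact (hθ a b).eq_of_npo_mul_left hle
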